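/- arXiv:1708.07815 — 2 statements merged into one kernel-verified Lean document; each statement's English description precedes it below -/
import Mathlib

section
/- Residual estimate for the fixed-point map: let x ∈ V, suppose the bilinear form Ã : (θ,φ) ↦ A(θ,φ) + 2B(x,θ,φ) satisfies the inf-sup condition with constant γ > 0, and set ε := sup_{φ∈V, ‖φ‖≤1} |A(x,φ) + B(x,x,φ) − L(φ)|. For Θ ∈ V let μ(Θ) ∈ V be any element satisfying Ã(μ(Θ),φ) = L(φ) + 2B(x,Θ,φ) − B(Θ,Θ,φ) for all φ ∈ V. Then γ·‖μ(Θ) − x‖ ≤ ε + C_b·‖Θ − x‖². -/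
/-!
Write `e = μΘ - x` and `r(φ) = A(x,φ) + B(x,x,φ) - L(φ)` for the residual of `x`.
Subtracting `Ã(x,φ)` from the defining equation of `μΘ` and using the symmetry of `B`
gives `Ã(e,φ) = -r(φ) - B(Θ-x,Θ-x,φ)`. On the unit ball the first term is at most `ε`
and the second at most `C_b‖Θ-x‖²`, so the inf-sup condition bounds `γ‖e‖`.
The boundedness of `A`, `B`, `L` enters only to make `r` bounded on the unit ball, so that
`ε` is a true supremum rather than the junk value `0` of `⨆` on an unbounded family.
-/

section UnitBall

variable {V : Type*} [NormedAddCommGroup V]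

lemma iSup_unitBall_le {f : V → ℝ} {c : ℝ} (h : ∀ φ : V, ‖φ‖ ≤ 1 → f φ ≤ c) :
    ⨆ φ : {φ : V // ‖φ‖ ≤ 1}, f φ ≤ c :=
  haveI : Nonempty {φ : V // ‖φ‖ ≤ 1} := ⟨⟨0, by simp⟩⟩
  ciSup_le fun φ => h φ φ.2

lemma abs_le_iSup_unitBall {f : V → ℝ} {c : ℝ} (hf : ∀ φ : V, |f φ| ≤ c * ‖φ‖)
    {φ : V} (hφ : ‖φ‖ ≤ 1) :
    |f φ| ≤ ⨆ ψ : {ψ : V // ‖ψ‖ ≤ 1}, |f ψ| := by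
  have hbdd : BddAbove (Set.range fun ψ : {ψ : V // ‖ψ‖ ≤ 1} => |f ψ|) := by
    refine ⟨|c|, ?_⟩
    rintro _ ⟨⟨ψ, hψ⟩, rfl⟩
    calc |f ψ| ≤ c * ‖ψ‖ := hf ψ
      _ ≤ |c| * ‖ψ‖ := by gcongr; exact le_abs_self c
      _ ≤ |c| := mul_le_of_le_one_right (abs_nonneg c) hψ
  exact le_ciSup hbdd (⟨φ, hφ⟩ : {ψ : V // ‖ψ‖ ≤ 1})

end UnitBall

section Forms

variable {V : Type*} [NormedAddCommGroup V] [NormedSpace ℝ V]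
  {A : V →ₗ[ℝ] V →ₗ[ℝ] ℝ} {B : V →ₗ[ℝ] V →ₗ[ℝ] V →ₗ[ℝ] ℝ} {L : V →ₗ[ℝ] ℝ}

lemma abs_residual_le {C_A C_b C_L : ℝ}
    (hA : ∀ x y : V, |A x y| ≤ C_A * ‖x‖ * ‖y‖)
    (hB : ∀ x y z : V, |B x y z| ≤ C_b * ‖x‖ * ‖y‖ * ‖z‖)
    (hL : ∀ x : V, |L x| ≤ C_L * ‖x‖) (x φ : V) :
    |A x φ + B x x φ - L φ| ≤ (C_A * ‖x‖ + C_b * ‖x‖ * ‖x‖ + C_L) * ‖φ‖ := by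
  calc |A x φ + B x x φ - L φ|
      ≤ |A x φ| + |B x x φ| + |L φ| := by
        simpa [sub_eq_add_neg] using abs_add_three (A x φ) (B x x φ) (-L φ)
    _ ≤ C_A * ‖x‖ * ‖φ‖ + C_b * ‖x‖ * ‖x‖ * ‖φ‖ + C_L * ‖φ‖ := by
      gcongr <;> [exact hA x φ; exact hB x x φ; exact hL φ]
    _ = (C_A * ‖x‖ + C_b * ‖x‖ * ‖x‖ + C_L) * ‖φ‖ := by ring

lemma neg_apply_le_mul_sq {C_b : ℝ} (hCb : 0 ≤ C_b)
    (hB : ∀ x y z : V, |B x y z| ≤ C_b * ‖x‖ * ‖y‖ * ‖z‖) (e : V) {φ : V} (hφ : ‖φ‖ ≤ 1) :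
    -B e e φ ≤ C_b * ‖e‖ ^ 2 :=
  calc -B e e φ ≤ |B e e φ| := neg_le_abs _
    _ ≤ C_b * ‖e‖ * ‖e‖ * ‖φ‖ := hB e e φ
    _ ≤ C_b * ‖e‖ * ‖e‖ * 1 := by gcongr
    _ = C_b * ‖e‖ ^ 2 := by ring

lemma linearized_apply_sub_eq {x Θ μ φ : V} (hsymm : B Θ x φ = B x Θ φ)
    (hμ : A μ φ + 2 * B x μ φ = L φ + 2 * B x Θ φ - B Θ Θ φ) :
    A (μ - x) φ + 2 * B x (μ - x) φ
      = -(A x φ + B x x φ - L φ) - B (Θ - x) (Θ - x) φ := by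
  simp only [map_sub, LinearMap.sub_apply]
  linarith

end Forms

theorem residual_estimate_fixed_point_map_general
    {V : Type*} [NormedAddCommGroup V] [NormedSpace ℝ V]
    (A : V →ₗ[ℝ] V →ₗ[ℝ] ℝ) (B : V →ₗ[ℝ] V →ₗ[ℝ] V →ₗ[ℝ] ℝ) (L : V →ₗ[ℝ] ℝ)
    (C_A C_b C_L : ℝ) (hCb : 0 < C_b)
    (hA : ∀ x y : V, |A x y| ≤ C_A * ‖x‖ * ‖y‖)
    (hBsymm : ∀ x y z : V, B x y z = B y x z)
    (hB : ∀ x y z : V, |B x y z| ≤ C_b * ‖x‖ * ‖y‖ * ‖z‖)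
    (hL : ∀ x : V, |L x| ≤ C_L * ‖x‖)
    (x : V) (γ : ℝ)
    (hinfsup : ∀ θ : V, γ * ‖θ‖ ≤
      ⨆ φ : {φ : V // ‖φ‖ ≤ 1}, (A θ (φ : V) + 2 * B x θ (φ : V)))
    (ε : ℝ)
    (hε : ε = ⨆ φ : {φ : V // ‖φ‖ ≤ 1},
      |A x (φ : V) + B x x (φ : V) - L (φ : V)|)
    (Θ μΘ : V)
    (hμ : ∀ φ : V, A μΘ φ + 2 * B x μΘ φ = L φ + 2 * B x Θ φ - B Θ Θ φ) :
    γ * ‖μΘ - x‖ ≤ ε + C_b * ‖Θ - x‖ ^ 2 := by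
  calc γ * ‖μΘ - x‖
      ≤ ⨆ φ : {φ : V // ‖φ‖ ≤ 1}, (A (μΘ - x) φ + 2 * B x (μΘ - x) φ) := hinfsup _
    _ ≤ ε + C_b * ‖Θ - x‖ ^ 2 := by
      refine iSup_unitBall_le (f := fun φ => A (μΘ - x) φ + 2 * B x (μΘ - x) φ) fun φ hφ => ?_
      rw [linearized_apply_sub_eq (hBsymm Θ x φ) (hμ φ)]
      have hres : |A x φ + B x x φ - L φ| ≤ ε :=
        hε ▸ abs_le_iSup_unitBall (abs_residual_le hA hB hL x) hφ
      linarith [neg_le_abs (A x φ + B x x φ - L φ),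
        neg_apply_le_mul_sq hCb.le hB (Θ - x) hφ]

/-- Residual estimate for the fixed-point map: if
`Ã(θ,φ) = A(θ,φ) + 2B(x,θ,φ)` satisfies the inf-sup condition with constant `γ > 0`,
`ε = sup_{‖φ‖≤1} |A(x,φ) + B(x,x,φ) − L(φ)|`, and `μΘ` satisfies
`Ã(μΘ,φ) = L(φ) + 2B(x,Θ,φ) − B(Θ,Θ,φ)` for all `φ`, then
`γ·‖μΘ − x‖ ≤ ε + C_b·‖Θ − x‖²`. -/
theorem residual_estimate_fixed_point_map
    {V : Type*} [NormedAddCommGroup V] [NormedSpace ℝ V]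
    (A : V →ₗ[ℝ] V →ₗ[ℝ] ℝ) (B : V →ₗ[ℝ] V →ₗ[ℝ] V →ₗ[ℝ] ℝ) (L : V →ₗ[ℝ] ℝ)
    (C_A C_b C_L : ℝ) (hCb : 0 < C_b)
    (hA : ∀ x y : V, |A x y| ≤ C_A * ‖x‖ * ‖y‖)
    (hBsymm : ∀ x y z : V, B x y z = B y x z)
    (hB : ∀ x y z : V, |B x y z| ≤ C_b * ‖x‖ * ‖y‖ * ‖z‖)
    (hL : ∀ x : V, |L x| ≤ C_L * ‖x‖)
    (x : V) (γ : ℝ) (hγ : 0 < γ)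
    (hinfsup : ∀ θ : V, γ * ‖θ‖ ≤
      ⨆ φ : {φ : V // ‖φ‖ ≤ 1}, (A θ (φ : V) + 2 * B x θ (φ : V)))
    (ε : ℝ)
    (hε : ε = ⨆ φ : {φ : V // ‖φ‖ ≤ 1},
      |A x (φ : V) + B x x (φ : V) - L (φ : V)|)
    (Θ μΘ : V)
    (hμ : ∀ φ : V, A μΘ φ + 2 * B x μΘ φ = L φ + 2 * B x Θ φ - B Θ Θ φ) :
    γ * ‖μΘ - x‖ ≤ ε + C_b * ‖Θ - x‖ ^ 2 :=
  residual_estimate_fixed_point_map_general A B L C_A C_b C_L hCb hA hBsymm hB hL x γ hinfsup ε hε Θ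
    μΘ hμ
end

section
/- Local quadratic convergence of the Newton method: let V be a finite-dimensional real normed vector space, let w ∈ V satisfy A(w,φ) + B(w,w,φ) = L(φ) for all φ ∈ V, and suppose the bilinear form (θ,φ) ↦ A(θ,φ) + 2B(w,θ,φ) satisfies the inf-sup condition with constant γ > 0. Set R := γ/(8·C_b). Then for every initial guess w₀ ∈ V with ‖w − w₀‖ ≤ R there exists a sequence (w_j)_{j≥1} in V such that for each j ≥ 1 the Newton equation A(w_j,φ) + 2B(w_{j−1},w_j,φ) = B(w_{j−1},w_{j−1},φ) + L(φ) holds for all φ ∈ V, and every such sequence satisfies ‖w − w_j‖ ≤ R, ‖w − w_j‖ ≤ (2·C_b/γ)·‖w − w_{j−1}‖² ≤ (1/4)·‖w − w_{j−1}‖ for all j ≥ 1; in particular w_j converges to w. -/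
/-!
The Newton step from `u` solves `a_u(x, φ) = B(u,u,φ) + L(φ)` with the linearization
`a_u(θ, φ) = A(θ,φ) + 2 B(u,θ,φ)`. Since `a_u = a_w - 2 B(w - u, ·, ·)`, the inf-sup constant of
`a_u` is at least `γ - 2 C_b ‖w - u‖ ≥ 3γ/4` on the ball of radius `R`; in finite dimension this
makes the step well defined. By the symmetry of `B` the error satisfies
`a_u(w - x, φ) = -B(w - u, w - u, φ)`, whence `(3γ/4) ‖w - x‖ ≤ C_b ‖w - u‖²`: the quadratic
estimate, which on the ball is also a contraction by `1/4`.
-/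

open Filter Topology

theorem exists_seq_of_forall_exists {α : Type*} {P : α → Prop} {r : α → α → Prop}
    (h : ∀ a, P a → ∃ b, r a b ∧ P b) {a₀ : α} (ha₀ : P a₀) :
    ∃ f : ℕ → α, f 0 = a₀ ∧ ∀ n, r (f n) (f (n + 1)) := by
  choose g hg using h
  let s : {a // P a} → {a // P a} := fun a => ⟨g a a.2, (hg a a.2).2⟩
  refine ⟨fun n => (s^[n] ⟨a₀, ha₀⟩).1, rfl, fun n => ?_⟩
  simp only [Function.iterate_succ_apply']
  exact (hg _ _).1

theorem tendsto_of_dist_le_mul_dist {α : Type*} [PseudoMetricSpace α] {u : ℕ → α} {a : α}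
    {c : ℝ} (hc₀ : 0 ≤ c) (hc₁ : c < 1) (hu : ∀ n, dist a (u (n + 1)) ≤ c * dist a (u n)) :
    Tendsto u atTop (𝓝 a) := by
  have hgeom : ∀ n, dist a (u n) ≤ c ^ n * dist a (u 0) := by
    intro n
    induction n with
    | zero => simp
    | succ n ih =>
      calc dist a (u (n + 1)) ≤ c * dist a (u n) := hu n
        _ ≤ c * (c ^ n * dist a (u 0)) := by gcongr
        _ = c ^ (n + 1) * dist a (u 0) := by ring
  have hlim : Tendsto (fun n => c ^ n * dist a (u 0)) atTop (𝓝 0) := by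
    simpa using (tendsto_pow_atTop_nhds_zero_of_lt_one hc₀ hc₁).mul_const (dist a (u 0))
  rw [tendsto_iff_dist_tendsto_zero]
  exact squeeze_zero (fun _ => dist_nonneg) (fun n => dist_comm (u n) a ▸ hgeom n) hlim

section InfSup

variable {V : Type*} [SeminormedAddCommGroup V]

def InfSup (a : V → V → ℝ) (γ : ℝ) : Prop :=
  ∀ θ : V, γ * ‖θ‖ ≤ ⨆ φ : {φ : V // ‖φ‖ ≤ 1}, a θ φ

theorem InfSup.mul_norm_le {a : V → V → ℝ} {γ : ℝ} (h : InfSup a γ) {θ : V} {M : ℝ}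
    (hM : ∀ φ : V, ‖φ‖ ≤ 1 → a θ φ ≤ M) : γ * ‖θ‖ ≤ M :=
  haveI : Nonempty {φ : V // ‖φ‖ ≤ 1} := ⟨⟨0, by simp⟩⟩
  (h θ).trans (ciSup_le fun φ => hM φ.1 φ.2)

end InfSup

theorem quadratic_and_contraction_of_mul_le {γ C a b : ℝ} (hγ : 0 < γ) (hC : 0 < C) (ha : 0 ≤ a)
    (hb : 0 ≤ b) (haR : a ≤ γ / (8 * C)) (hab : (γ - 2 * C * a) * b ≤ C * a ^ 2) :
    b ≤ 2 * C / γ * a ^ 2 ∧ 2 * C / γ * a ^ 2 ≤ 1 / 4 * a := by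
  have hCa : 2 * C * a ≤ γ / 4 := by
    rw [le_div_iff₀ (by positivity)] at haR
    linarith
  constructor
  · rw [div_mul_eq_mul_div, le_div_iff₀ hγ]
    nlinarith [mul_le_mul_of_nonneg_right hCa hb]
  · rw [div_mul_eq_mul_div, div_le_iff₀ hγ]
    nlinarith

section Newton

variable {V : Type*} [NormedAddCommGroup V] [NormedSpace ℝ V]
  (A : V →ₗ[ℝ] V →ₗ[ℝ] ℝ) (B : V →ₗ[ℝ] V →ₗ[ℝ] V →ₗ[ℝ] ℝ) (L : V →ₗ[ℝ] ℝ)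

/-- Newton's method for the residual `v ↦ A v + B v v - L`, whose derivative at `u` is
`A + 2 B u` because `B` is symmetric. -/
def IsNewtonStep (u x : V) : Prop :=
  ∀ φ : V, A x φ + 2 * B u x φ = B u u φ + L φ

variable {A B L} {C_b γ : ℝ} {w : V}

theorem InfSup.linearization_mul_norm_le (hCb : 0 ≤ C_b)
    (hB : ∀ x y z : V, |B x y z| ≤ C_b * ‖x‖ * ‖y‖ * ‖z‖)
    (hinfsup : InfSup (fun θ φ => A θ φ + 2 * B w θ φ) γ) (u θ : V) {M : ℝ}
    (hM : ∀ φ : V, ‖φ‖ ≤ 1 → A θ φ + 2 * B u θ φ ≤ M) :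
    (γ - 2 * C_b * ‖w - u‖) * ‖θ‖ ≤ M := by
  rw [sub_mul, sub_le_iff_le_add]
  refine hinfsup.mul_norm_le fun φ hφ => ?_
  have hsplit : A θ φ + 2 * B w θ φ = (A θ φ + 2 * B u θ φ) + 2 * B (w - u) θ φ := by
    simp only [map_sub, LinearMap.sub_apply]
    ring
  have hpert : B (w - u) θ φ ≤ C_b * ‖w - u‖ * ‖θ‖ :=
    calc B (w - u) θ φ ≤ C_b * ‖w - u‖ * ‖θ‖ * ‖φ‖ := (le_abs_self _).trans (hB _ _ _)
      _ ≤ C_b * ‖w - u‖ * ‖θ‖ * 1 := by gcongr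
      _ = C_b * ‖w - u‖ * ‖θ‖ := mul_one _
  linarith [hM φ hφ]

theorem exists_isNewtonStep [FiniteDimensional ℝ V] (hCb : 0 ≤ C_b)
    (hB : ∀ x y z : V, |B x y z| ≤ C_b * ‖x‖ * ‖y‖ * ‖z‖)
    (hinfsup : InfSup (fun θ φ => A θ φ + 2 * B w θ φ) γ) {u : V}
    (hu : 2 * C_b * ‖w - u‖ < γ) : ∃ x, IsNewtonStep A B L u x := by
  let T : V →ₗ[ℝ] V →ₗ[ℝ] ℝ := A + (2 : ℝ) • B u
  have hT : ∀ x φ, T x φ = A x φ + 2 * B u x φ := fun _ _ => rfl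
  have hinj : Function.Injective T := by
    refine (injective_iff_map_eq_zero T).mpr fun θ hθ => norm_le_zero_iff.mp ?_
    have hbound := hinfsup.linearization_mul_norm_le hCb hB u θ (M := 0) fun φ _ => by
      rw [← hT, hθ, LinearMap.zero_apply]
    exact nonpos_of_mul_nonpos_right hbound (by linarith)
  obtain ⟨x, hx⟩ := (LinearMap.injective_iff_surjective_of_finrank_eq_finrank
    Subspace.dual_finrank_eq.symm).mp hinj (B u u + L)
  exact ⟨x, fun φ => by rw [← hT, hx, LinearMap.add_apply]⟩

theorem IsNewtonStep.error_eq (hBsymm : ∀ x y z : V, B x y z = B y x z)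
    (hw : ∀ φ : V, A w φ + B w w φ = L φ) {u x : V} (hx : IsNewtonStep A B L u x) (φ : V) :
    A (w - x) φ + 2 * B u (w - x) φ = -B (w - u) (w - u) φ := by
  have := hBsymm w u φ
  simp only [map_sub, LinearMap.sub_apply]
  linarith [hw φ, hx φ]

theorem IsNewtonStep.norm_sub_le (hCb : 0 < C_b) (hγ : 0 < γ)
    (hBsymm : ∀ x y z : V, B x y z = B y x z)
    (hB : ∀ x y z : V, |B x y z| ≤ C_b * ‖x‖ * ‖y‖ * ‖z‖)
    (hw : ∀ φ : V, A w φ + B w w φ = L φ)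
    (hinfsup : InfSup (fun θ φ => A θ φ + 2 * B w θ φ) γ) {u x : V}
    (hu : ‖w - u‖ ≤ γ / (8 * C_b)) (hx : IsNewtonStep A B L u x) :
    ‖w - x‖ ≤ 2 * C_b / γ * ‖w - u‖ ^ 2 ∧ 2 * C_b / γ * ‖w - u‖ ^ 2 ≤ 1 / 4 * ‖w - u‖ := by
  refine quadratic_and_contraction_of_mul_le hγ hCb (norm_nonneg _) (norm_nonneg _) hu ?_
  refine hinfsup.linearization_mul_norm_le hCb.le hB u (w - x) fun φ hφ => ?_
  calc A (w - x) φ + 2 * B u (w - x) φ = -B (w - u) (w - u) φ := hx.error_eq hBsymm hw φ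
    _ ≤ C_b * ‖w - u‖ * ‖w - u‖ * ‖φ‖ := (neg_le_abs _).trans (hB _ _ _)
    _ ≤ C_b * ‖w - u‖ * ‖w - u‖ * 1 := by gcongr
    _ = C_b * ‖w - u‖ ^ 2 := by ring

end Newton

theorem newton_method_local_quadratic_convergence_general
    {V : Type*} [NormedAddCommGroup V] [NormedSpace ℝ V] [FiniteDimensional ℝ V]
    (A : V →ₗ[ℝ] V →ₗ[ℝ] ℝ) (B : V →ₗ[ℝ] V →ₗ[ℝ] V →ₗ[ℝ] ℝ) (L : V →ₗ[ℝ] ℝ)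
    (C_b : ℝ) (hCb : 0 < C_b)
    (hBsymm : ∀ x y z : V, B x y z = B y x z)
    (hB : ∀ x y z : V, |B x y z| ≤ C_b * ‖x‖ * ‖y‖ * ‖z‖)
    (w : V) (hw : ∀ φ : V, A w φ + B w w φ = L φ)
    (γ : ℝ) (hγ : 0 < γ)
    (hinfsup : ∀ θ : V, γ * ‖θ‖ ≤
      ⨆ φ : {φ : V // ‖φ‖ ≤ 1}, (A θ (φ : V) + 2 * B w θ (φ : V)))
    (R : ℝ) (hR : R = γ / (8 * C_b))
    (w₀ : V) (hw₀ : ‖w - w₀‖ ≤ R) :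
    (∃ ws : ℕ → V, ws 0 = w₀ ∧ ∀ j : ℕ, ∀ φ : V,
        A (ws (j + 1)) φ + 2 * B (ws j) (ws (j + 1)) φ
          = B (ws j) (ws j) φ + L φ) ∧
    (∀ ws : ℕ → V, ws 0 = w₀ →
      (∀ j : ℕ, ∀ φ : V,
        A (ws (j + 1)) φ + 2 * B (ws j) (ws (j + 1)) φ
          = B (ws j) (ws j) φ + L φ) →
      (∀ j : ℕ,
        ‖w - ws (j + 1)‖ ≤ R ∧
        ‖w - ws (j + 1)‖ ≤ (2 * C_b / γ) * ‖w - ws j‖ ^ 2 ∧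
        (2 * C_b / γ) * ‖w - ws j‖ ^ 2 ≤ (1 / 4) * ‖w - ws j‖) ∧
      Filter.Tendsto ws Filter.atTop (nhds w)) := by
  subst hR
  have hstep {u x : V} (hu : ‖w - u‖ ≤ γ / (8 * C_b)) (hx : IsNewtonStep A B L u x) :=
    hx.norm_sub_le hCb hγ hBsymm hB hw hinfsup hu
  have hball {u x : V} (hu : ‖w - u‖ ≤ γ / (8 * C_b)) (hx : IsNewtonStep A B L u x) :
      ‖w - x‖ ≤ γ / (8 * C_b) := by
    obtain ⟨hquad, hcontr⟩ := hstep hu hx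
    linarith [norm_nonneg (w - u)]
  refine ⟨exists_seq_of_forall_exists (r := IsNewtonStep A B L)
    (P := fun u => ‖w - u‖ ≤ γ / (8 * C_b)) (fun u hu => ?_) hw₀, fun ws hws₀ hws => ?_⟩
  · have hsmall : 2 * C_b * ‖w - u‖ < γ := by
      rw [le_div_iff₀ (by positivity)] at hu
      linarith
    obtain ⟨x, hx⟩ := exists_isNewtonStep (L := L) hCb.le hB hinfsup hsmall
    exact ⟨x, hx, hball hu hx⟩
  · have hin : ∀ j, ‖w - ws j‖ ≤ γ / (8 * C_b) := fun j => by
      induction j with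
      | zero => exact hws₀ ▸ hw₀
      | succ j ih => exact hball ih (hws j)
    refine ⟨fun j => ⟨hin (j + 1), hstep (hin j) (hws j)⟩, ?_⟩
    refine tendsto_of_dist_le_mul_dist (c := 1 / 4) (by norm_num) (by norm_num) fun j => ?_
    obtain ⟨hquad, hcontr⟩ := hstep (hin j) (hws j)
    simpa only [dist_eq_norm] using hquad.trans hcontr

/-- Local quadratic convergence of the Newton method: on a
finite-dimensional `V`, with `w` a solution of `A(w,φ) + B(w,w,φ) = L(φ)` and the
linearized form `(θ,φ) ↦ A(θ,φ) + 2B(w,θ,φ)` satisfying the inf-sup condition with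
constant `γ > 0`, set `R = γ/(8·C_b)`. For every initial guess `w₀` with
`‖w − w₀‖ ≤ R`, a Newton sequence exists, and every Newton sequence stays in the ball
of radius `R`, contracts quadratically with constant `2·C_b/γ` (hence by the factor
`1/4` per step), and converges to `w`. -/
theorem newton_method_local_quadratic_convergence
    {V : Type*} [NormedAddCommGroup V] [NormedSpace ℝ V] [FiniteDimensional ℝ V]
    (A : V →ₗ[ℝ] V →ₗ[ℝ] ℝ) (B : V →ₗ[ℝ] V →ₗ[ℝ] V →ₗ[ℝ] ℝ) (L : V →ₗ[ℝ] ℝ)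
    (C_A C_b C_L : ℝ) (hCb : 0 < C_b)
    (hA : ∀ x y : V, |A x y| ≤ C_A * ‖x‖ * ‖y‖)
    (hBsymm : ∀ x y z : V, B x y z = B y x z)
    (hB : ∀ x y z : V, |B x y z| ≤ C_b * ‖x‖ * ‖y‖ * ‖z‖)
    (hL : ∀ x : V, |L x| ≤ C_L * ‖x‖)
    (w : V) (hw : ∀ φ : V, A w φ + B w w φ = L φ)
    (γ : ℝ) (hγ : 0 < γ)
    (hinfsup : ∀ θ : V, γ * ‖θ‖ ≤
      ⨆ φ : {φ : V // ‖φ‖ ≤ 1}, (A θ (φ : V) + 2 * B w θ (φ : V)))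
    (R : ℝ) (hR : R = γ / (8 * C_b))
    (w₀ : V) (hw₀ : ‖w - w₀‖ ≤ R) :
    (∃ ws : ℕ → V, ws 0 = w₀ ∧ ∀ j : ℕ, ∀ φ : V,
        A (ws (j + 1)) φ + 2 * B (ws j) (ws (j + 1)) φ
          = B (ws j) (ws j) φ + L φ) ∧
    (∀ ws : ℕ → V, ws 0 = w₀ →
      (∀ j : ℕ, ∀ φ : V,
        A (ws (j + 1)) φ + 2 * B (ws j) (ws (j + 1)) φ
          = B (ws j) (ws j) φ + L φ) →
      (∀ j : ℕ,
        ‖w - ws (j + 1)‖ ≤ R ∧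
        ‖w - ws (j + 1)‖ ≤ (2 * C_b / γ) * ‖w - ws j‖ ^ 2 ∧
        (2 * C_b / γ) * ‖w - ws j‖ ^ 2 ≤ (1 / 4) * ‖w - ws j‖) ∧
      Filter.Tendsto ws Filter.atTop (nhds w)) :=
  newton_method_local_quadratic_convergence_general A B L C_b hCb hBsymm hB w hw γ hγ hinfsup R hR
    w₀ hw₀
end
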